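/- arXiv:1504.01279 — 11 statements merged into one kernel-verified Lean document; each statement's English description precedes it below -/
import Mathlib

section
/- The sectional K-curvature equals a constant A for all 2-planes in V if and only if g(K(X,W),K(Y,Z)) - g(K(Y,W),K(X,Z)) = A(g(X,W)g(Y,Z) - g(Y,W)g(X,Z)) for all X,Y,Z,W in V. -/
/-!
The difference `R = R_K - A • R_g` of the `K`-curvature tensor
`R_K(X,Y,Z,W) = ⟪K(X,W), K(Y,Z)⟫ - ⟪K(Y,W), K(X,Z)⟫` and the constant-curvature model
`R_g(X,Y,Z,W) = ⟪X,W⟫⟪Y,Z⟫ - ⟪Y,W⟫⟪X,Z⟫` has the symmetries of a curvature tensor, because `K` is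
symmetric. Constant sectional `K`-curvature `A` says `R(X,Y,Y,X) = 0` for orthonormal `X, Y`, hence
for all `X, Y` by bilinearity and Gram–Schmidt. Polarizing, `R(X,Y,Z,W)` is antisymmetric in `Y, Z`,
so its three cyclic permutations in `X, Y, Z` agree and the Bianchi identity forces `3 R = 0`.
-/

open RealInnerProductSpace

section CurvatureTensor

variable {V : Type*} [AddCommGroup V] [Module ℝ V]

structure IsAlgebraicCurvatureTensor (R : V →ₗ[ℝ] V →ₗ[ℝ] V →ₗ[ℝ] V →ₗ[ℝ] ℝ) : Prop where
  antisymm_left : ∀ X Y Z W, R Y X Z W = -R X Y Z W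
  antisymm_right : ∀ X Y Z W, R X Y W Z = -R X Y Z W
  pair_symm : ∀ X Y Z W, R Z W X Y = R X Y Z W
  bianchi : ∀ X Y Z W, R X Y Z W + R Y Z X W + R Z X Y W = 0

namespace IsAlgebraicCurvatureTensor

variable {R S : V →ₗ[ℝ] V →ₗ[ℝ] V →ₗ[ℝ] V →ₗ[ℝ] ℝ}

-- Not `R - c • S`: Lean finds no `AddCommGroup` instance on four-fold nested linear maps.
lemma add_smul (hR : IsAlgebraicCurvatureTensor R) (hS : IsAlgebraicCurvatureTensor S)
    (c : ℝ) : IsAlgebraicCurvatureTensor (R + c • S) where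
  antisymm_left X Y Z W := by
    simp only [LinearMap.add_apply, LinearMap.smul_apply, smul_eq_mul]
    rw [hR.antisymm_left, hS.antisymm_left]; ring
  antisymm_right X Y Z W := by
    simp only [LinearMap.add_apply, LinearMap.smul_apply, smul_eq_mul]
    rw [hR.antisymm_right, hS.antisymm_right]; ring
  pair_symm X Y Z W := by
    simp only [LinearMap.add_apply, LinearMap.smul_apply, smul_eq_mul]
    rw [hR.pair_symm, hS.pair_symm]
  bianchi X Y Z W := by
    simp only [LinearMap.add_apply, LinearMap.smul_apply, smul_eq_mul]
    linear_combination hR.bianchi X Y Z W + c * hS.bianchi X Y Z W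

lemma apply_self_left (hR : IsAlgebraicCurvatureTensor R) (X Z W : V) : R X X Z W = 0 := by
  linarith [hR.antisymm_left X X Z W]

lemma apply_self_right (hR : IsAlgebraicCurvatureTensor R) (X Y Z : V) : R X Y Z Z = 0 := by
  linarith [hR.antisymm_right X Y Z Z]

lemma eq_zero_of_sectional_eq_zero (hR : IsAlgebraicCurvatureTensor R)
    (h : ∀ X Y, R X Y Y X = 0) : R = 0 := by
  have polar₁ : ∀ X Y Z, R X Y Z X = -R X Z Y X := fun X Y Z => by
    have := h X (Y + Z)
    simp only [map_add, LinearMap.add_apply, h] at this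
    linarith
  have polar₂ : ∀ X Y Z W, R X Y Z W = -R X Z Y W := fun X Y Z W => by
    have := polar₁ (X + W) Y Z
    simp only [map_add, LinearMap.add_apply, polar₁ X Y Z, polar₁ W Y Z] at this
    linarith [hR.pair_symm W Y Z X, hR.antisymm_left Z X W Y, hR.antisymm_right X Z Y W,
      hR.pair_symm W Z Y X, hR.antisymm_left Y X W Z, hR.antisymm_right X Y Z W]
  ext X Y Z W
  have := hR.bianchi X Y Z W
  simp only [LinearMap.zero_apply]
  linarith [polar₂ Y Z X W, hR.antisymm_left X Y Z W, polar₂ Z X Y W, hR.antisymm_left Y Z X W]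

end IsAlgebraicCurvatureTensor

end CurvatureTensor

section GaussForm

variable {V E : Type*} [AddCommGroup V] [Module ℝ V]
  [NormedAddCommGroup E] [InnerProductSpace ℝ E]

/-- The curvature that the Gauss equation attaches to a second fundamental form `B`. -/
def gaussForm (B : V →ₗ[ℝ] V →ₗ[ℝ] E) : V →ₗ[ℝ] V →ₗ[ℝ] V →ₗ[ℝ] V →ₗ[ℝ] ℝ :=
  LinearMap.mk₂ ℝ
    (fun X Y => LinearMap.mk₂ ℝ (fun Z W => ⟪B X W, B Y Z⟫ - ⟪B Y W, B X Z⟫)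
      (by intros; simp only [map_add, inner_add_right]; ring)
      (by intros; simp only [map_smul, real_inner_smul_right]; ring)
      (by intros; simp only [map_add, inner_add_left]; ring)
      (by intros; simp only [map_smul, real_inner_smul_left]; ring))
    (by intros; ext; simp only [LinearMap.mk₂_apply, LinearMap.add_apply, map_add,
      inner_add_left, inner_add_right]; ring)
    (by intros; ext; simp only [LinearMap.mk₂_apply, LinearMap.smul_apply, map_smul,
      real_inner_smul_left, real_inner_smul_right, smul_eq_mul]; ring)
    (by intros; ext; simp only [LinearMap.mk₂_apply, LinearMap.add_apply, map_add,
      inner_add_left, inner_add_right]; ring)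
    (by intros; ext; simp only [LinearMap.mk₂_apply, LinearMap.smul_apply, map_smul,
      real_inner_smul_left, real_inner_smul_right, smul_eq_mul]; ring)

@[simp]
lemma gaussForm_apply (B : V →ₗ[ℝ] V →ₗ[ℝ] E) (X Y Z W : V) :
    gaussForm B X Y Z W = ⟪B X W, B Y Z⟫ - ⟪B Y W, B X Z⟫ := rfl

lemma isAlgebraicCurvatureTensor_gaussForm {B : V →ₗ[ℝ] V →ₗ[ℝ] E}
    (hB : ∀ X Y, B X Y = B Y X) : IsAlgebraicCurvatureTensor (gaussForm B) where
  antisymm_left X Y Z W := by simp only [gaussForm_apply]; ring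
  antisymm_right X Y Z W := by
    simp only [gaussForm_apply, real_inner_comm (B X Z), real_inner_comm (B Y Z)]; ring
  pair_symm X Y Z W := by
    simp only [gaussForm_apply, hB Z Y, hB W X, hB W Y, hB Z X, real_inner_comm (B X W)]
  bianchi X Y Z W := by
    simp only [gaussForm_apply, hB Z X, hB Z Y, hB Y X]; ring

end GaussForm

section InnerProductSpace

variable {V : Type*} [NormedAddCommGroup V] [InnerProductSpace ℝ V]
  {R : V →ₗ[ℝ] V →ₗ[ℝ] V →ₗ[ℝ] V →ₗ[ℝ] ℝ}

lemma isAlgebraicCurvatureTensor_gaussForm_innerₗ :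
    IsAlgebraicCurvatureTensor (gaussForm (innerₗ V)) :=
  isAlgebraicCurvatureTensor_gaussForm fun X Y => real_inner_comm Y X

lemma sectional_eq_zero_of_orthogonal
    (h : ∀ X Y, ‖X‖ = 1 → ‖Y‖ = 1 → ⟪X, Y⟫ = 0 → R X Y Y X = 0)
    {X Y : V} (hXY : ⟪X, Y⟫ = 0) : R X Y Y X = 0 := by
  rcases eq_or_ne X 0 with rfl | hX
  · simp
  rcases eq_or_ne Y 0 with rfl | hY
  · simp
  have := h (‖X‖⁻¹ • X) (‖Y‖⁻¹ • Y) (norm_smul_inv_norm hX) (norm_smul_inv_norm hY)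
    (by simp [real_inner_smul_left, real_inner_smul_right, hXY])
  simpa [hX, hY] using this

lemma IsAlgebraicCurvatureTensor.sectional_eq_zero_of_orthonormal
    (hR : IsAlgebraicCurvatureTensor R)
    (h : ∀ X Y, ‖X‖ = 1 → ‖Y‖ = 1 → ⟪X, Y⟫ = 0 → R X Y Y X = 0) (X Y : V) :
    R X Y Y X = 0 := by
  have horth : ⟪X, Y - (⟪X, Y⟫ / ⟪X, X⟫) • X⟫ = 0 := by
    rcases eq_or_ne X 0 with rfl | hX
    · simp
    rw [inner_sub_right, real_inner_smul_right, div_mul_cancel₀ _ (inner_self_ne_zero.2 hX),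
      sub_self]
  have := sectional_eq_zero_of_orthogonal h horth
  simpa [hR.apply_self_left, hR.apply_self_right] using this

end InnerProductSpace

theorem constant_sectional_K_curvature_iff_general
    {V : Type*} [NormedAddCommGroup V] [InnerProductSpace ℝ V]
    (K : V →ₗ[ℝ] V →ₗ[ℝ] V)
    (hsymm : ∀ X Y : V, K X Y = K Y X)
    (A : ℝ) :
    (∀ X Y : V, ‖X‖ = 1 → ‖Y‖ = 1 → ⟪X, Y⟫ = 0 →
        ⟪K X X, K Y Y⟫ - ⟪K X Y, K X Y⟫ = A) ↔
    (∀ X Y Z W : V,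
        ⟪K X W, K Y Z⟫ - ⟪K Y W, K X Z⟫
          = A * (⟪X, W⟫ * ⟪Y, Z⟫ - ⟪Y, W⟫ * ⟪X, Z⟫)) := by
  obtain ⟨R, hR, hR_apply⟩ : ∃ R : V →ₗ[ℝ] V →ₗ[ℝ] V →ₗ[ℝ] V →ₗ[ℝ] ℝ,
      IsAlgebraicCurvatureTensor R ∧ ∀ X Y Z W, R X Y Z W =
        ⟪K X W, K Y Z⟫ - ⟪K Y W, K X Z⟫ - A * (⟪X, W⟫ * ⟪Y, Z⟫ - ⟪Y, W⟫ * ⟪X, Z⟫) :=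
    ⟨gaussForm K + (-A) • gaussForm (innerₗ V),
      (isAlgebraicCurvatureTensor_gaussForm hsymm).add_smul
        isAlgebraicCurvatureTensor_gaussForm_innerₗ (-A),
      fun X Y Z W => by
        simp only [LinearMap.add_apply, LinearMap.smul_apply, smul_eq_mul, gaussForm_apply,
          innerₗ_apply_apply, RCLike.inner_apply, Real.ringHom_apply]
        ring⟩
  constructor
  · intro hsec X Y Z W
    have hR_orthonormal : ∀ X Y : V, ‖X‖ = 1 → ‖Y‖ = 1 → ⟪X, Y⟫ = 0 → R X Y Y X = 0 := by
      intro X Y hX hY hXY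
      rw [hR_apply, hsymm Y X, real_inner_comm X Y, hXY, real_inner_self_eq_norm_sq X,
        real_inner_self_eq_norm_sq Y, hX, hY, hsec X Y hX hY hXY]
      ring
    have hzero :=
      hR.eq_zero_of_sectional_eq_zero (hR.sectional_eq_zero_of_orthonormal hR_orthonormal)
    have := hR_apply X Y Z W
    simp only [hzero, LinearMap.zero_apply] at this
    linarith
  · intro h X Y hX hY hXY
    have := h X Y Y X
    rw [hsymm Y X, real_inner_comm X Y, hXY, real_inner_self_eq_norm_sq X,
      real_inner_self_eq_norm_sq Y, hX, hY] at this
    linarith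

/-- The sectional K-curvature is a constant `A` for all 2-planes iff
`g(K(X,W),K(Y,Z)) - g(K(Y,W),K(X,Z)) = A (g(X,W) g(Y,Z) - g(Y,W) g(X,Z))`. -/
theorem constant_sectional_K_curvature_iff
    {V : Type*} [NormedAddCommGroup V] [InnerProductSpace ℝ V]
    [FiniteDimensional ℝ V] (hdim : 2 ≤ Module.finrank ℝ V)
    (K : V →ₗ[ℝ] V →ₗ[ℝ] V)
    (hsymm : ∀ X Y : V, K X Y = K Y X)
    (hadj : ∀ X Y Z : V, ⟪K X Y, Z⟫ = ⟪Y, K X Z⟫)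
    (A : ℝ) :
    (∀ X Y : V, ‖X‖ = 1 → ‖Y‖ = 1 → ⟪X, Y⟫ = 0 →
        ⟪K X X, K Y Y⟫ - ⟪K X Y, K X Y⟫ = A) ↔
    (∀ X Y Z W : V,
        ⟪K X W, K Y Z⟫ - ⟪K Y W, K X Z⟫
          = A * (⟪X, W⟫ * ⟪Y, Z⟫ - ⟪Y, W⟫ * ⟪X, Z⟫)) :=
  constant_sectional_K_curvature_iff_general K hsymm A
end

section
/- If K is defined on an orthonormal basis e_1,…,e_n by K(e_1,e_1)=λe_1, K(e_1,e_i)=(λ/2)e_i, K(e_i,e_i)=(λ/2)e_1, K(e_i,e_j)=0 for distinct i,j ≥ 2, then the sectional K-curvature is constant and equal to λ²/4 for all 2-planes in V. -/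
/-!
Writing `e = e_1` and `λ = l`, the prescribed values, extended by symmetry to all pairs of basis
vectors, are those of the tensor `K(X,Y) = (l/2) (⟪X,e⟫ Y + ⟪Y,e⟫ X + (⟪X,Y⟫ - ⟪X,e⟫⟪Y,e⟫) e)`,
so by bilinearity `K` is this tensor. For orthonormal `X, Y` with `a = ⟪X,e⟫`, `c = ⟪Y,e⟫`, both `⟪K(X,X),K(Y,Y)⟫` and
`‖K(X,Y)‖²` equal `l²/4` times a polynomial in `a, c`, namely `1 + a² + c² - 3a²c²` and
`a² + c² - 3a²c²`, and their difference is `l²/4`.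
-/

open RealInnerProductSpace

section

variable {V : Type*} [NormedAddCommGroup V] [InnerProductSpace ℝ V]

def sectionalKCurvature (K : V →ₗ[ℝ] V →ₗ[ℝ] V) (X Y : V) : ℝ :=
  ⟪K X X, K Y Y⟫ - ⟪K X Y, K X Y⟫

noncomputable def modelTensor (e : V) (l : ℝ) : V →ₗ[ℝ] V →ₗ[ℝ] V :=
  LinearMap.mk₂ ℝ
    (fun X Y => (l / 2) • (⟪X, e⟫ • Y + ⟪Y, e⟫ • X + (⟪X, Y⟫ - ⟪X, e⟫ * ⟪Y, e⟫) • e))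
    (fun X X' Y => by simp only [inner_add_left]; module)
    (fun c X Y => by simp only [real_inner_smul_left]; module)
    (fun X Y Y' => by simp only [inner_add_left, inner_add_right]; module)
    (fun c X Y => by simp only [real_inner_smul_left, real_inner_smul_right]; module)

theorem modelTensor_apply (e : V) (l : ℝ) (X Y : V) :
    modelTensor e l X Y =
      (l / 2) • (⟪X, e⟫ • Y + ⟪Y, e⟫ • X + (⟪X, Y⟫ - ⟪X, e⟫ * ⟪Y, e⟫) • e) :=
  rfl

theorem sectionalKCurvature_modelTensor {e X Y : V} (he : ‖e‖ = 1) (hX : ‖X‖ = 1)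
    (hY : ‖Y‖ = 1) (hXY : ⟪X, Y⟫ = 0) (l : ℝ) :
    sectionalKCurvature (modelTensor e l) X Y = l ^ 2 / 4 := by
  have hee : ⟪e, e⟫ = 1 := by rw [real_inner_self_eq_norm_sq, he, one_pow]
  have hXX : ⟪X, X⟫ = 1 := by rw [real_inner_self_eq_norm_sq, hX, one_pow]
  have hYY : ⟪Y, Y⟫ = 1 := by rw [real_inner_self_eq_norm_sq, hY, one_pow]
  have hYX : ⟪Y, X⟫ = 0 := by rw [real_inner_comm, hXY]
  simp only [sectionalKCurvature, modelTensor_apply, inner_add_left, inner_add_right,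
    real_inner_smul_left, real_inner_smul_right, hee, hXX, hYY, hXY, hYX,
    real_inner_comm e X, real_inner_comm e Y]
  ring

theorem eq_modelTensor_of_basis {ι : Type*} [Fintype ι] (b : OrthonormalBasis ι ℝ V) (i₀ : ι)
    (K : V →ₗ[ℝ] V →ₗ[ℝ] V) (hsymm : ∀ X Y : V, K X Y = K Y X) (l : ℝ)
    (h₀₀ : K (b i₀) (b i₀) = l • b i₀)
    (h₀i : ∀ i, i ≠ i₀ → K (b i₀) (b i) = (l / 2) • b i)
    (hii : ∀ i, i ≠ i₀ → K (b i) (b i) = (l / 2) • b i₀)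
    (hij : ∀ i j, i ≠ i₀ → j ≠ i₀ → i ≠ j → K (b i) (b j) = 0) :
    K = modelTensor (b i₀) l := by
  classical
  refine b.toBasis.ext fun i => b.toBasis.ext fun j => ?_
  simp only [OrthonormalBasis.coe_toBasis, modelTensor_apply, b.inner_eq_ite]
  by_cases hi : i = i₀ <;> by_cases hj : j = i₀ <;> subst_vars
  · rw [h₀₀]; simp only [if_true]; module
  · simp [h₀i j hj, hj, Ne.symm hj]
  · rw [hsymm, h₀i i hi]; simp [hi]
  · by_cases hij' : i = j
    · subst hij'
      simp [hii i hi, hi]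
    · simp [hij i j hi hj hij', hi, hj, hij']

end

theorem example_tensor_constant_curvature_general
    {V : Type*} [NormedAddCommGroup V] [InnerProductSpace ℝ V]
    {n : ℕ} (b : OrthonormalBasis (Fin (n + 1)) ℝ V)
    (K : V →ₗ[ℝ] V →ₗ[ℝ] V)
    (hsymm : ∀ X Y : V, K X Y = K Y X)
    (l : ℝ)
    (h11 : K (b 0) (b 0) = l • b 0)
    (h1i : ∀ i : Fin (n + 1), i ≠ 0 → K (b 0) (b i) = (l / 2) • b i)
    (hii : ∀ i : Fin (n + 1), i ≠ 0 → K (b i) (b i) = (l / 2) • b 0)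
    (hij : ∀ i j : Fin (n + 1), i ≠ 0 → j ≠ 0 → i ≠ j → K (b i) (b j) = 0) :
    ∀ X Y : V, ‖X‖ = 1 → ‖Y‖ = 1 → ⟪X, Y⟫ = 0 →
      ⟪K X X, K Y Y⟫ - ⟪K X Y, K X Y⟫ = l ^ 2 / 4 := by
  intro X Y hX hY hXY
  rw [eq_modelTensor_of_basis b 0 K hsymm l h11 h1i hii hij]
  exact sectionalKCurvature_modelTensor (b.orthonormal.1 0) hX hY hXY l

/-- For the model tensor `K(e_1,e_1)=λ e_1`, `K(e_1,e_i)=(λ/2) e_i`,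
`K(e_i,e_i)=(λ/2) e_1`, `K(e_i,e_j)=0` (`i ≠ j`, `i,j ≥ 2`), the sectional
K-curvature is constant equal to `λ²/4`. -/
theorem example_tensor_constant_curvature
    {V : Type*} [NormedAddCommGroup V] [InnerProductSpace ℝ V]
    {n : ℕ} (b : OrthonormalBasis (Fin (n + 1)) ℝ V)
    (K : V →ₗ[ℝ] V →ₗ[ℝ] V)
    (hsymm : ∀ X Y : V, K X Y = K Y X)
    (hadj : ∀ X Y Z : V, ⟪K X Y, Z⟫ = ⟪Y, K X Z⟫)
    (l : ℝ)
    (h11 : K (b 0) (b 0) = l • b 0)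
    (h1i : ∀ i : Fin (n + 1), i ≠ 0 → K (b 0) (b i) = (l / 2) • b i)
    (hii : ∀ i : Fin (n + 1), i ≠ 0 → K (b i) (b i) = (l / 2) • b 0)
    (hij : ∀ i j : Fin (n + 1), i ≠ 0 → j ≠ 0 → i ≠ j → K (b i) (b j) = 0) :
    ∀ X Y : V, ‖X‖ = 1 → ‖Y‖ = 1 → ⟪X, Y⟫ = 0 →
      ⟪K X X, K Y Y⟫ - ⟪K X Y, K X Y⟫ = l ^ 2 / 4 :=
  example_tensor_constant_curvature_general b K hsymm l h11 h1i hii hij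
end

section
/- For the tensor K(X,Y) = (λ-3μ)g(X,e_1)g(Y,e_1)e_1 + μg(X,Y)e_1 + μg(X,e_1)Y + μg(Y,e_1)X on an inner product space, if X,Y are orthonormal vectors with e_1-components x_1, y_1, then the sectional K-curvature satisfies k(X∧Y) = μ² + μ(λ-2μ)(x_1² + y_1²). -/
open RealInnerProductSpace

/-- For `K(X,Y) = (λ-3μ) g(X,e₁) g(Y,e₁) e₁ + μ g(X,Y) e₁ + μ g(X,e₁) Y + μ g(Y,e₁) X`
and orthonormal `X, Y`, the sectional K-curvature is
`μ² + μ(λ-2μ)(x₁² + y₁²)` where `x₁ = g(X,e₁)`, `y₁ = g(Y,e₁)`. -/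
theorem chen_type_tensor_sectional_curvature
    {V : Type*} [NormedAddCommGroup V] [InnerProductSpace ℝ V]
    (l m : ℝ) (e₁ : V) (he₁ : ‖e₁‖ = 1)
    (K : V → V → V)
    (hK : ∀ X Y : V, K X Y =
      ((l - 3 * m) * ⟪X, e₁⟫ * ⟪Y, e₁⟫) • e₁ + (m * ⟪X, Y⟫) • e₁
        + (m * ⟪X, e₁⟫) • Y + (m * ⟪Y, e₁⟫) • X)
    (X Y : V) (hX : ‖X‖ = 1) (hY : ‖Y‖ = 1) (hXY : ⟪X, Y⟫ = 0) :
    ⟪K X X, K Y Y⟫ - ⟪K X Y, K X Y⟫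
      = m ^ 2 + m * (l - 2 * m) * (⟪X, e₁⟫ ^ 2 + ⟪Y, e₁⟫ ^ 2) := by
  have hee : ⟪e₁, e₁⟫ = 1 := by
    rw [real_inner_self_eq_norm_sq, he₁]; norm_num
  have hXX : ⟪X, X⟫ = 1 := by
    rw [real_inner_self_eq_norm_sq, hX]; norm_num
  have hYY : ⟪Y, Y⟫ = 1 := by
    rw [real_inner_self_eq_norm_sq, hY]; norm_num
  have hYX : ⟪Y, X⟫ = 0 := by rw [real_inner_comm]; exact hXY
  simp only [hK, inner_add_left, inner_add_right, real_inner_smul_left,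
    real_inner_smul_right, hee, hXX, hYY, hXY, hYX,
    real_inner_comm e₁ X, real_inner_comm e₁ Y]
  ring
end

section
/- If the function Φ(X) = C(X,X,X) on the unit sphere of V attains a local maximum at a unit vector U, then for every unit vector W orthogonal to U one has C(U,U,W) = 0 and 2C(W,W,U) - C(U,U,U) ≤ 0; moreover, if 2C(W,W,U) - C(U,U,U) = 0 then C(W,W,W) = 0. -/
/-!
Parametrize the great circle through `U` and `W` rationally,
`s ↦ ((1 - s²) • U + 2s • W) / (1 + s²)`. Since `Φ` is cubic, the local maximality of `Φ`
at `U` becomes, after clearing the denominator, the statement that the polynomial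
`6b s + (12c - 6a) s² + (8d - 12b) s³ - 12c s⁴ + 6b s⁵ - 2a s⁶` is `≤ 0` near `s = 0`,
where `a, b, c, d = C(U,U,U), C(U,U,W), C(W,W,U), C(W,W,W)`. Its lowest-order nonzero
coefficient must then sit in even degree and be negative.
-/

open Filter Topology RealInnerProductSpace

section SignNearZero

variable {f : ℝ → ℝ}

lemma nonpos_of_eventually_pow_mul_nonpos (hf : ContinuousAt f 0) (n : ℕ)
    (h : ∀ᶠ s in 𝓝[>] 0, s ^ n * f s ≤ 0) : f 0 ≤ 0 := by
  by_contra! hpos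
  have hfpos : ∀ᶠ s in 𝓝[>] 0, 0 < f s :=
    (hf.eventually (lt_mem_nhds hpos)).filter_mono nhdsWithin_le_nhds
  obtain ⟨s, hs, hfs, hspos⟩ := (h.and (hfpos.and self_mem_nhdsWithin)).exists
  exact hs.not_gt (mul_pos (pow_pos hspos n) hfs)

lemma eq_zero_of_eventually_pow_mul_nonpos (hf : ContinuousAt f 0) {n : ℕ} (hn : Odd n)
    (h : ∀ᶠ s in 𝓝 0, s ^ n * f s ≤ 0) : f 0 = 0 := by
  have hright : f 0 ≤ 0 :=
    nonpos_of_eventually_pow_mul_nonpos hf n (h.filter_mono nhdsWithin_le_nhds)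
  have hneg : ∀ᶠ s in 𝓝 0, s ^ n * -f (-s) ≤ 0 := by
    have h' : ∀ᶠ s in 𝓝 (0 : ℝ), (-s) ^ n * f (-s) ≤ 0 :=
      (continuous_neg.tendsto' 0 0 neg_zero).eventually h
    filter_upwards [h'] with s hs
    rwa [hn.neg_pow, neg_mul, ← mul_neg] at hs
  have hleft : 0 ≤ f 0 := by
    have := nonpos_of_eventually_pow_mul_nonpos (f := fun s => -f (-s))
      (hf.comp_of_eq continuous_neg.continuousAt neg_zero).neg n
      (hneg.filter_mono nhdsWithin_le_nhds)
    simpa using this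
  exact le_antisymm hright hleft

end SignNearZero

lemma coeffs_of_eventually_circle_cubic_le (a b c d : ℝ)
    (h : ∀ᶠ s in 𝓝 0, (1 - s ^ 2) ^ 3 * a + 3 * (1 - s ^ 2) ^ 2 * (2 * s) * b
      + 3 * (1 - s ^ 2) * (2 * s) ^ 2 * c + (2 * s) ^ 3 * d ≤ (1 + s ^ 2) ^ 3 * a) :
    b = 0 ∧ 2 * c - a ≤ 0 ∧ (2 * c - a = 0 → d = 0) := by
  have hb : b = 0 := by
    have := eq_zero_of_eventually_pow_mul_nonpos
      (f := fun s => 6 * b + (12 * c - 6 * a) * s + (8 * d - 12 * b) * s ^ 2 - 12 * c * s ^ 3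
        + 6 * b * s ^ 4 - 2 * a * s ^ 5) (by fun_prop) odd_one
      (h.mono fun s hs => by linear_combination hs)
    linarith
  subst hb
  have hca : 12 * c - 6 * a ≤ 0 := by
    have := nonpos_of_eventually_pow_mul_nonpos
      (f := fun s => (12 * c - 6 * a) + 8 * d * s - 12 * c * s ^ 2 - 2 * a * s ^ 4)
      (by fun_prop) 2
      ((h.filter_mono nhdsWithin_le_nhds).mono fun s hs => by linear_combination hs)
    simpa using this
  refine ⟨rfl, by linarith, fun hca0 => ?_⟩
  obtain rfl : a = 2 * c := by linarith
  have := eq_zero_of_eventually_pow_mul_nonpos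
    (f := fun s => 8 * d - 12 * c * s - 4 * c * s ^ 3) (by fun_prop) (n := 3) ⟨1, rfl⟩
    (h.mono fun s hs => by linear_combination hs)
  simpa using this

section CubicForm

variable {R M : Type*} [CommRing R] [AddCommGroup M] [Module R M]
  (C : M →ₗ[R] M →ₗ[R] M →ₗ[R] R)

lemma cubic_smul (r : R) (X : M) : C (r • X) (r • X) (r • X) = r ^ 3 * C X X X := by
  simp only [map_smul, LinearMap.smul_apply, smul_eq_mul]
  ring

lemma cubic_smul_add_smul (hsym12 : ∀ X Y Z : M, C X Y Z = C Y X Z)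
    (hsym23 : ∀ X Y Z : M, C X Y Z = C X Z Y) (p q : R) (U W : M) :
    C (p • U + q • W) (p • U + q • W) (p • U + q • W) =
      p ^ 3 * C U U U + 3 * p ^ 2 * q * C U U W + 3 * p * q ^ 2 * C W W U
        + q ^ 3 * C W W W := by
  have hUWU : C U W U = C U U W := hsym23 U W U
  have hWUU : C W U U = C U U W := (hsym12 W U U).trans hUWU
  have hUWW : C U W W = C W W U := (hsym12 U W W).trans (hsym23 W U W)
  have hWUW : C W U W = C W W U := hsym23 W U W
  simp only [map_add, map_smul, LinearMap.add_apply, LinearMap.smul_apply, smul_eq_mul,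
    hUWU, hWUU, hUWW, hWUW]
  ring

end CubicForm

section Sphere

variable {V : Type*} [NormedAddCommGroup V] [InnerProductSpace ℝ V]

lemma norm_one_sub_sq_smul_add_two_mul_smul {U W : V} (hU : ‖U‖ = 1) (hW : ‖W‖ = 1)
    (hUW : ⟪U, W⟫ = 0) (s : ℝ) : ‖(1 - s ^ 2) • U + (2 * s) • W‖ = 1 + s ^ 2 := by
  have horth : ⟪(1 - s ^ 2) • U, (2 * s) • W⟫ = 0 := by
    rw [real_inner_smul_left, real_inner_smul_right, hUW, mul_zero, mul_zero]
  rw [← sq_eq_sq₀ (norm_nonneg _) (by positivity), sq,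
    norm_add_sq_eq_norm_sq_add_norm_sq_real horth]
  simp only [norm_smul, hU, hW, Real.norm_eq_abs, mul_one, abs_mul_abs_self]
  ring

lemma eventually_cubic_le_norm_pow_mul (C : V →ₗ[ℝ] V →ₗ[ℝ] V →ₗ[ℝ] ℝ) {U : V}
    (hU : ‖U‖ = 1)
    (hmax : IsLocalMaxOn (fun X : V => C X X X) {X : V | ‖X‖ = 1} U) :
    ∀ᶠ Y in 𝓝 U, C Y Y Y ≤ ‖Y‖ ^ 3 * C U U U := by
  have hnormalize :
      Tendsto (fun Y : V => ‖Y‖⁻¹ • Y) (𝓝 U) (𝓝[{X : V | ‖X‖ = 1}] U) := by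
    refine tendsto_nhdsWithin_iff.mpr ⟨?_, ?_⟩
    · have hcont : ContinuousAt (fun Y : V => ‖Y‖⁻¹ • Y) U := by
        fun_prop (disch := simp [hU])
      simpa [hU] using hcont.tendsto
    · have hU0 : U ≠ 0 := ne_zero_of_norm_ne_zero (hU.trans_ne one_ne_zero)
      filter_upwards [eventually_ne_nhds hU0] with Y hY
      exact norm_smul_inv_norm hY
  filter_upwards [hnormalize.eventually hmax] with Y hY
  have hY' : Y = ‖Y‖ • (‖Y‖⁻¹ • Y) := by
    rcases eq_or_ne Y 0 with rfl | hY0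
    · simp
    · rw [smul_smul, mul_inv_cancel₀ (norm_ne_zero_iff.mpr hY0), one_smul]
  calc C Y Y Y
      = ‖Y‖ ^ 3 * C (‖Y‖⁻¹ • Y) (‖Y‖⁻¹ • Y) (‖Y‖⁻¹ • Y) := by rw [← cubic_smul, ← hY']
    _ ≤ ‖Y‖ ^ 3 * C U U U := mul_le_mul_of_nonneg_left hY (by positivity)

end Sphere

/-- If `Φ(X) = C(X,X,X)` attains a local maximum on the unit sphere at `U`, then
for every unit `W ⟂ U`: `C(U,U,W) = 0`, `2C(W,W,U) - C(U,U,U) ≤ 0`, and if the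
latter vanishes then `C(W,W,W) = 0`. -/
theorem local_max_of_cubic_form
    {V : Type*} [NormedAddCommGroup V] [InnerProductSpace ℝ V]
    (C : V →ₗ[ℝ] V →ₗ[ℝ] V →ₗ[ℝ] ℝ)
    (hsym12 : ∀ X Y Z : V, C X Y Z = C Y X Z)
    (hsym23 : ∀ X Y Z : V, C X Y Z = C X Z Y)
    (U : V) (hU : ‖U‖ = 1)
    (hmax : IsLocalMaxOn (fun X : V => C X X X) {X : V | ‖X‖ = 1} U) :
    ∀ W : V, ‖W‖ = 1 → ⟪U, W⟫ = 0 →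
      C U U W = 0 ∧ 2 * C W W U - C U U U ≤ 0 ∧
        (2 * C W W U - C U U U = 0 → C W W W = 0) := by
  intro W hW hUW
  set γ : ℝ → V := fun s => (1 - s ^ 2) • U + (2 * s) • W
  have hγ : Tendsto γ (𝓝 0) (𝓝 U) := by
    simpa [γ] using (show Continuous γ by fun_prop).tendsto 0
  apply coeffs_of_eventually_circle_cubic_le
  filter_upwards [hγ.eventually (eventually_cubic_le_norm_pow_mul C hU hmax)] with s hs
  rwa [cubic_smul_add_smul C hsym12 hsym23,
    norm_one_sub_sq_smul_add_two_mul_smul hU hW hUW] at hs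
end

section
/- If the sectional K-curvature is constant equal to A and e_1 is a unit vector where Φ(X)=C(X,X,X) attains a local maximum with value λ_1, then every eigenvalue λ' of K_{e_1} on the orthogonal complement of e_1 satisfies λ'² - λ_1λ' + A = 0 and 2λ' ≤ λ_1, hence λ' = (λ_1 - √(λ_1² - 4A))/2. -/
/-!
Along the great circle `t ↦ cos t • e₁ + sin t • W` through `e₁` in a unit direction `W ⟂ e₁`,
`Φ` is the cubic trigonometric polynomial `λ₁ cos³ + 3b cos² sin + 3c cos sin² + d sin³` with
`b = ⟪W, K e₁ e₁⟫` and `c = ⟪W, K e₁ W⟫`. At a local maximum its derivative `3b` vanishes, so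
`K e₁ e₁ = λ₁ e₁`, and `λ₁ - Φ = (1 - cos t) h(t)` with `h(0) = 3λ₁ - 6c`, so `2c ≤ λ₁`.
For an eigenvector `X ⟂ e₁` of `K_{e₁}` with eigenvalue `λ'`, the curvature identity on
`(e₁, X, X, e₁)` reads `λ₁λ' - λ'² = A`, and `c = λ'` gives `2λ' ≤ λ₁`, which selects the smaller
root of the quadratic.
-/

open RealInnerProductSpace Filter Topology Real

noncomputable def circleCubic (a b c d t : ℝ) : ℝ :=
  a * cos t ^ 3 + 3 * b * (cos t ^ 2 * sin t) + 3 * c * (cos t * sin t ^ 2) + d * sin t ^ 3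

theorem hasDerivAt_circleCubic_zero (a b c d : ℝ) :
    HasDerivAt (circleCubic a b c d) (3 * b) 0 := by
  have hc := hasDerivAt_cos 0
  have hs := hasDerivAt_sin 0
  have h := ((((hc.fun_pow 3).const_mul a).fun_add
    (((hc.fun_pow 2).fun_mul hs).const_mul (3 * b))).fun_add
    ((hc.fun_mul (hs.fun_pow 2)).const_mul (3 * c))).fun_add ((hs.fun_pow 3).const_mul d)
  simp only [sin_zero, cos_zero] at h
  exact h.congr_deriv (by norm_num)

theorem circleCubic_zero_sub (a c d t : ℝ) :
    a - circleCubic a 0 c d t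
      = (1 - cos t) * (a * (1 + cos t + cos t ^ 2) - (1 + cos t) * (3 * c * cos t + d * sin t)) := by
  unfold circleCubic
  linear_combination (-(3 * c * cos t + d * sin t)) * sin_sq_add_cos_sq t

theorem eventually_cos_lt_one : ∀ᶠ t in 𝓝[≠] (0 : ℝ), cos t < 1 := by
  have hπ : ∀ᶠ t in 𝓝[≠] (0 : ℝ), |t| < π :=
    eventually_nhdsWithin_of_eventually_nhds
      (eventually_abs_sub_lt 0 pi_pos |>.mono fun t ht => by simpa using ht)
  filter_upwards [hπ, self_mem_nhdsWithin] with t ht ht0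
  simpa [cos_abs] using cos_lt_cos_of_nonneg_of_le_pi le_rfl ht.le (abs_pos.mpr ht0)

theorem circleCubic_coeff_of_isLocalMax {a b c d : ℝ} (h : IsLocalMax (circleCubic a b c d) 0) :
    b = 0 ∧ 2 * c ≤ a := by
  have hb : b = 0 := by
    have := h.hasDerivAt_eq_zero (hasDerivAt_circleCubic_zero a b c d)
    linarith
  subst hb
  set q : ℝ → ℝ := fun t =>
    a * (1 + cos t + cos t ^ 2) - (1 + cos t) * (3 * c * cos t + d * sin t)
  have hq_tendsto : Tendsto q (𝓝[≠] 0) (𝓝 (3 * a - 6 * c)) := by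
    have : Continuous q := by fun_prop
    convert this.continuousAt.tendsto.mono_left nhdsWithin_le_nhds using 2
    simp [q]
    ring
  have hnonneg : ∀ᶠ t in 𝓝[≠] (0 : ℝ), 0 ≤ q t := by
    filter_upwards [h.filter_mono nhdsWithin_le_nhds, eventually_cos_lt_one] with t hmax hcos
    have hfactor := circleCubic_zero_sub a c d t
    have h0 : circleCubic a 0 c d 0 = a := by simp [circleCubic]
    rw [h0] at hmax
    exact nonneg_of_mul_nonneg_right (by linarith) (sub_pos.mpr hcos)
  exact ⟨rfl, by linarith [ge_of_tendsto hq_tendsto hnonneg]⟩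

theorem eq_sub_sqrt_div_two_of_sq_sub_mul_add_eq_zero {x a A : ℝ}
    (h : x ^ 2 - a * x + A = 0) (hle : 2 * x ≤ a) : x = (a - √(a ^ 2 - 4 * A)) / 2 := by
  rw [show a ^ 2 - 4 * A = (a - 2 * x) ^ 2 by linear_combination (-4) * h,
    sqrt_sq (by linarith)]
  ring

section InnerProductSpace

variable {V : Type*} [NormedAddCommGroup V] [InnerProductSpace ℝ V]

theorem norm_cos_smul_add_sin_smul {e W : V} (he : ‖e‖ = 1) (hW : ‖W‖ = 1) (heW : ⟪e, W⟫ = 0)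
    (t : ℝ) : ‖cos t • e + sin t • W‖ = 1 := by
  have horth : ⟪cos t • e, sin t • W⟫ = 0 := by
    rw [real_inner_smul_left, real_inner_smul_right, heW, mul_zero, mul_zero]
  have hsq := norm_add_sq_eq_norm_sq_add_norm_sq_real horth
  rw [norm_smul, norm_smul, he, hW, mul_one, mul_one, norm_eq_abs, norm_eq_abs,
    abs_mul_abs_self, abs_mul_abs_self] at hsq
  nlinarith [norm_nonneg (cos t • e + sin t • W), cos_sq_add_sin_sq t]

theorem IsLocalMaxOn.isLocalMax_comp_cos_smul_add_sin_smul {β : Type*} [Preorder β] {f : V → β}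
    {e W : V} (hf : IsLocalMaxOn f {X | ‖X‖ = 1} e) (he : ‖e‖ = 1) (hW : ‖W‖ = 1)
    (heW : ⟪e, W⟫ = 0) : IsLocalMax (fun t : ℝ => f (cos t • e + sin t • W)) 0 := by
  rw [← isLocalMaxOn_univ_iff]
  exact IsLocalMaxOn.comp_continuousOn (g := fun t : ℝ => cos t • e + sin t • W)
    (t := {X | ‖X‖ = 1}) (by simpa)
    (fun t _ => norm_cos_smul_add_sin_smul he hW heW t) (by fun_prop) (Set.mem_univ 0)

theorem inner_apply_cos_smul_add_sin_smul (K : V →ₗ[ℝ] V →ₗ[ℝ] V)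
    (hsymm : ∀ X Y : V, K X Y = K Y X) (hadj : ∀ X Y Z : V, ⟪K X Y, Z⟫ = ⟪Y, K X Z⟫)
    (e W : V) (t : ℝ) :
    ⟪cos t • e + sin t • W, K (cos t • e + sin t • W) (cos t • e + sin t • W)⟫
      = circleCubic ⟪e, K e e⟫ ⟪W, K e e⟫ ⟪W, K e W⟫ ⟪W, K W W⟫ t := by
  have heeW : ⟪e, K e W⟫ = ⟪W, K e e⟫ := by rw [← hadj, real_inner_comm]
  have heWW : ⟪e, K W W⟫ = ⟪W, K e W⟫ := by rw [← hadj, hsymm, real_inner_comm]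
  simp only [map_add, map_smul, LinearMap.add_apply, LinearMap.smul_apply, inner_add_left,
    inner_add_right, real_inner_smul_left, real_inner_smul_right, hsymm W e, heeW, heWW]
  unfold circleCubic
  ring

theorem inner_apply_eq_zero_and_two_mul_le_of_isLocalMaxOn (K : V →ₗ[ℝ] V →ₗ[ℝ] V)
    (hsymm : ∀ X Y : V, K X Y = K Y X) (hadj : ∀ X Y Z : V, ⟪K X Y, Z⟫ = ⟪Y, K X Z⟫)
    {e W : V} (he : ‖e‖ = 1) (hmax : IsLocalMaxOn (fun X : V => ⟪X, K X X⟫) {X | ‖X‖ = 1} e)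
    (hW : ‖W‖ = 1) (hWe : ⟪W, e⟫ = 0) : ⟪W, K e e⟫ = 0 ∧ 2 * ⟪W, K e W⟫ ≤ ⟪e, K e e⟫ := by
  have hcircle := hmax.isLocalMax_comp_cos_smul_add_sin_smul he hW (by rwa [real_inner_comm])
  simp only [inner_apply_cos_smul_add_sin_smul K hsymm hadj] at hcircle
  exact circleCubic_coeff_of_isLocalMax hcircle

theorem apply_self_eq_smul_of_isLocalMaxOn (K : V →ₗ[ℝ] V →ₗ[ℝ] V)
    (hsymm : ∀ X Y : V, K X Y = K Y X) (hadj : ∀ X Y Z : V, ⟪K X Y, Z⟫ = ⟪Y, K X Z⟫)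
    {e : V} (he : ‖e‖ = 1) (hmax : IsLocalMaxOn (fun X : V => ⟪X, K X X⟫) {X | ‖X‖ = 1} e) :
    K e e = ⟪e, K e e⟫ • e := by
  set v := K e e - ⟪e, K e e⟫ • e
  have hee : ⟪e, e⟫ = 1 := by rw [real_inner_self_eq_norm_sq, he, one_pow]
  have hve : ⟪v, e⟫ = 0 := by
    rw [inner_sub_left, real_inner_smul_left, hee, real_inner_comm, mul_one, sub_self]
  have hvK : ⟪v, K e e⟫ = 0 := by
    rcases eq_or_ne v 0 with hv | hv
    · rw [hv, inner_zero_left]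
    have hnorm : ‖v‖ ≠ 0 := norm_ne_zero_iff.mpr hv
    have hunit := (inner_apply_eq_zero_and_two_mul_le_of_isLocalMaxOn K hsymm hadj he hmax
      (W := ‖v‖⁻¹ • v) (by simp [norm_smul, hnorm])
      (by rw [real_inner_smul_left, hve, mul_zero])).1
    rw [real_inner_smul_left, mul_eq_zero] at hunit
    exact hunit.resolve_left (inv_ne_zero hnorm)
  have hvv : ⟪v, v⟫ = 0 := by
    rw [inner_sub_right, real_inner_smul_right, hvK, hve, mul_zero, sub_zero]
  exact sub_eq_zero.mp (inner_self_eq_zero.mp hvv)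

end InnerProductSpace

theorem eigenvalues_at_local_max_general
    {V : Type*} [NormedAddCommGroup V] [InnerProductSpace ℝ V]
    (K : V →ₗ[ℝ] V →ₗ[ℝ] V)
    (hsymm : ∀ X Y : V, K X Y = K Y X)
    (hadj : ∀ X Y Z : V, ⟪K X Y, Z⟫ = ⟪Y, K X Z⟫)
    (A : ℝ)
    (hconst : ∀ X Y Z W : V,
      ⟪K X W, K Y Z⟫ - ⟪K Y W, K X Z⟫
        = A * (⟪X, W⟫ * ⟪Y, Z⟫ - ⟪Y, W⟫ * ⟪X, Z⟫))
    (e₁ : V) (he₁ : ‖e₁‖ = 1)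
    (hmax : IsLocalMaxOn (fun X : V => ⟪X, K X X⟫) {X : V | ‖X‖ = 1} e₁)
    (l₁ : ℝ) (hl₁ : ⟪e₁, K e₁ e₁⟫ = l₁) :
    ∀ (l' : ℝ) (X : V), ‖X‖ = 1 → ⟪X, e₁⟫ = 0 → K e₁ X = l' • X →
      l' ^ 2 - l₁ * l' + A = 0 ∧ 2 * l' ≤ l₁ ∧
        l' = (l₁ - Real.sqrt (l₁ ^ 2 - 4 * A)) / 2 := by
  intro l' X hX hXe hEig
  have hK : K e₁ e₁ = l₁ • e₁ := hl₁ ▸ apply_self_eq_smul_of_isLocalMaxOn K hsymm hadj he₁ hmax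
  have hXX : ⟪X, X⟫ = 1 := by rw [real_inner_self_eq_norm_sq, hX, one_pow]
  have hee : ⟪e₁, e₁⟫ = 1 := by rw [real_inner_self_eq_norm_sq, he₁, one_pow]
  have hXKX : ⟪X, K e₁ X⟫ = l' := by rw [hEig, real_inner_smul_right, hXX, mul_one]
  have heKX : ⟪e₁, K X X⟫ = l' := by rw [← hadj, hsymm, real_inner_comm, hXKX]
  have hquad : l' ^ 2 - l₁ * l' + A = 0 := by
    have hcurv := hconst e₁ X X e₁
    rw [hK, hsymm X e₁, hEig, real_inner_smul_left, heKX, real_inner_smul_left,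
      real_inner_smul_right, hXX, hee, hXe, real_inner_comm, hXe] at hcurv
    linear_combination -hcurv
  have hle : 2 * l' ≤ l₁ := by
    simpa only [hXKX, hl₁] using
      (inner_apply_eq_zero_and_two_mul_le_of_isLocalMaxOn K hsymm hadj he₁ hmax hX hXe).2
  exact ⟨hquad, hle, eq_sub_sqrt_div_two_of_sq_sub_mul_add_eq_zero hquad hle⟩

/-- If the sectional K-curvature is a constant `A` and `Φ(X) = C(X,X,X)` attains a
local maximum `λ₁` at a unit vector `e₁`, then every eigenvalue `λ'` of `K_{e₁}` on
the orthogonal complement of `e₁` satisfies `λ'² - λ₁ λ' + A = 0` and `2λ' ≤ λ₁`,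
hence `λ' = (λ₁ - √(λ₁² - 4A))/2`. -/
theorem eigenvalues_at_local_max
    {V : Type*} [NormedAddCommGroup V] [InnerProductSpace ℝ V]
    [FiniteDimensional ℝ V] (hdim : 2 ≤ Module.finrank ℝ V)
    (K : V →ₗ[ℝ] V →ₗ[ℝ] V)
    (hsymm : ∀ X Y : V, K X Y = K Y X)
    (hadj : ∀ X Y Z : V, ⟪K X Y, Z⟫ = ⟪Y, K X Z⟫)
    (A : ℝ)
    (hconst : ∀ X Y Z W : V,
      ⟪K X W, K Y Z⟫ - ⟪K Y W, K X Z⟫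
        = A * (⟪X, W⟫ * ⟪Y, Z⟫ - ⟪Y, W⟫ * ⟪X, Z⟫))
    (e₁ : V) (he₁ : ‖e₁‖ = 1)
    (hmax : IsLocalMaxOn (fun X : V => ⟪X, K X X⟫) {X : V | ‖X‖ = 1} e₁)
    (l₁ : ℝ) (hl₁ : ⟪e₁, K e₁ e₁⟫ = l₁) :
    ∀ (l' : ℝ) (X : V), ‖X‖ = 1 → ⟪X, e₁⟫ = 0 → K e₁ X = l' • X →
      l' ^ 2 - l₁ * l' + A = 0 ∧ 2 * l' ≤ l₁ ∧
        l' = (l₁ - Real.sqrt (l₁ ^ 2 - 4 * A)) / 2 :=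
  eigenvalues_at_local_max_general K hsymm hadj A hconst e₁ he₁ hmax l₁ hl₁
end

section
/- If V has constant sectional K-curvature A and K is trace-free (tr_g K = 0), then A ≤ 0, and A = 0 if and only if K = 0. -/
open RealInnerProductSpace

/-- Trace via an orthonormal basis. -/
lemma trace_eq_sum_inner' {V : Type*} [NormedAddCommGroup V] [InnerProductSpace ℝ V]
    [FiniteDimensional ℝ V] {ι : Type*} [Fintype ι] [DecidableEq ι]
    (b : OrthonormalBasis ι ℝ V) (f : V →ₗ[ℝ] V) :
    LinearMap.trace ℝ V f = ∑ i, ⟪b i, f (b i)⟫ := by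
  rw [LinearMap.trace_eq_matrix_trace ℝ b.toBasis, Matrix.trace]
  congr 1
  ext i
  rw [Matrix.diag_apply, LinearMap.toMatrix_apply, b.coe_toBasis, b.coe_toBasis_repr_apply,
    b.repr_apply_apply]

/-- If `V` has constant sectional K-curvature `A` and `K` is trace-free, then
`A ≤ 0`, and `A = 0` iff `K = 0`. -/
theorem trace_free_constant_curvature_nonpositive
    {V : Type*} [NormedAddCommGroup V] [InnerProductSpace ℝ V]
    [FiniteDimensional ℝ V] (hdim : 2 ≤ Module.finrank ℝ V)
    (K : V →ₗ[ℝ] V →ₗ[ℝ] V)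
    (hsymm : ∀ X Y : V, K X Y = K Y X)
    (hadj : ∀ X Y Z : V, ⟪K X Y, Z⟫ = ⟪Y, K X Z⟫)
    (A : ℝ)
    (hconst : ∀ X Y Z W : V,
      ⟪K X W, K Y Z⟫ - ⟪K Y W, K X Z⟫
        = A * (⟪X, W⟫ * ⟪Y, Z⟫ - ⟪Y, W⟫ * ⟪X, Z⟫))
    (htf : ∀ X : V, LinearMap.trace ℝ V (K X) = 0) :
    A ≤ 0 ∧ (A = 0 ↔ K = 0) := by
  set n := Module.finrank ℝ V with hn
  let b := stdOrthonormalBasis ℝ V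
  have hb := (stdOrthonormalBasis ℝ V).orthonormal
  have h3 : ∀ i j, ⟪b i, b j⟫ = if i = j then (1:ℝ) else 0 :=
    orthonormal_iff_ite.mp hb
  -- The sum ∑ K (b i) (b i) vanishes by trace-freeness.
  have hzero : ∑ i, K (b i) (b i) = 0 := by
    apply ext_inner_left ℝ
    intro X
    rw [inner_sum, inner_zero_right]
    calc ∑ i, ⟪X, K (b i) (b i)⟫
        = ∑ i, ⟪b i, K X (b i)⟫ := by
          refine Finset.sum_congr rfl fun i _ => ?_
          rw [real_inner_comm, hadj, hsymm]
      _ = LinearMap.trace ℝ V (K X) := (trace_eq_sum_inner' b (K X)).symm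
      _ = 0 := htf X
  set S : ℝ := ∑ i, ∑ j, ‖K (b i) (b j)‖ ^ 2 with hS
  have hSnonneg : 0 ≤ S := Finset.sum_nonneg fun i _ =>
    Finset.sum_nonneg fun j _ => by positivity
  -- key identity
  have hkey : -S = A * ((n : ℝ) ^ 2 - n) := by
    have h1 : ∑ i, ∑ j, ⟪K (b i) (b i), K (b j) (b j)⟫ = (0:ℝ) := by
      simp_rw [← inner_sum, ← sum_inner, hzero, inner_zero_left]
    have h2 : ∀ i j, ⟪K (b j) (b i), K (b i) (b j)⟫ = ‖K (b i) (b j)‖ ^ 2 := by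
      intro i j
      rw [hsymm (b j) (b i), real_inner_self_eq_norm_sq]
    calc -S = ∑ i, ∑ j,
          (⟪K (b i) (b i), K (b j) (b j)⟫ - ⟪K (b j) (b i), K (b i) (b j)⟫) := by
          simp only [Finset.sum_sub_distrib, h1, h2, hS, zero_sub]
      _ = ∑ i, ∑ j, A * (⟪b i, b i⟫ * ⟪b j, b j⟫ - ⟪b j, b i⟫ * ⟪b i, b j⟫) := by
          exact Finset.sum_congr rfl fun i _ => Finset.sum_congr rfl fun j _ =>
            hconst (b i) (b j) (b j) (b i)
      _ = ∑ i : Fin n, ∑ j : Fin n, A * (1 - if i = j then (1:ℝ) else 0) := by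
          refine Finset.sum_congr rfl fun i _ => Finset.sum_congr rfl fun j _ => ?_
          rw [h3, h3, h3, h3]
          by_cases hij : i = j <;> simp [hij, eq_comm]
      _ = A * ((n : ℝ) ^ 2 - n) := by
          simp [mul_sub, Finset.sum_sub_distrib, Finset.sum_ite_eq, Finset.sum_const]
          ring
  have hnpos : (0:ℝ) < (n : ℝ) ^ 2 - n := by
    have h2n : (2:ℝ) ≤ (n : ℝ) := by exact_mod_cast hdim
    nlinarith
  have hA : A ≤ 0 := by nlinarith
  refine ⟨hA, ?_, ?_⟩
  · -- A = 0 → K = 0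
    intro hA0
    have hS0 : S = 0 := by
      have : -S = 0 := by rw [hkey, hA0, zero_mul]
      linarith
    have hterm : ∀ i j, K (b i) (b j) = 0 := by
      intro i j
      have h1 := (Finset.sum_eq_zero_iff_of_nonneg
        (fun i _ => Finset.sum_nonneg fun j _ => by positivity)).mp hS0 i (Finset.mem_univ i)
      have h2 := (Finset.sum_eq_zero_iff_of_nonneg
        (fun j _ => by positivity)).mp h1 j (Finset.mem_univ j)
      have := pow_eq_zero_iff (n := 2) (by norm_num) |>.mp h2
      exact norm_eq_zero.mp this
    apply (stdOrthonormalBasis ℝ V).toBasis.ext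
    intro i
    apply (stdOrthonormalBasis ℝ V).toBasis.ext
    intro j
    simpa using hterm i j
  · -- K = 0 → A = 0
    intro hK0
    have h01 : (⟨0, by omega⟩ : Fin n) ≠ ⟨1, by omega⟩ := by
      simp [Fin.ext_iff]
    have := hconst (b ⟨0, by omega⟩) (b ⟨1, by omega⟩) (b ⟨1, by omega⟩) (b ⟨0, by omega⟩)
    rw [hK0] at this
    simp only [LinearMap.zero_apply, inner_zero_left, sub_zero, sub_self] at this
    rw [h3, h3, h3, h3] at this
    simp [h01, h01.symm] at this
    linarith [this]
end

section
/- If [K,K] = 0 and tr_g K = 0, then K = 0. -/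
open RealInnerProductSpace

lemma trace_inner_formula
    {V : Type*} [NormedAddCommGroup V] [InnerProductSpace ℝ V]
    [FiniteDimensional ℝ V] (b : OrthonormalBasis (Fin (Module.finrank ℝ V)) ℝ V)
    (f : V →ₗ[ℝ] V) :
    LinearMap.trace ℝ V f = ∑ i, ⟪b i, f (b i)⟫ := by
  rw [LinearMap.trace_eq_matrix_trace ℝ b.toBasis, Matrix.trace]
  simp [Matrix.diag, LinearMap.toMatrix_apply, OrthonormalBasis.coe_toBasis,
    OrthonormalBasis.coe_toBasis_repr_apply, b.repr_apply_apply]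

/-- If `[K,K] = 0` and `K` is trace-free, then `K = 0`. -/
theorem commuting_trace_free_is_zero
    {V : Type*} [NormedAddCommGroup V] [InnerProductSpace ℝ V]
    [FiniteDimensional ℝ V]
    (K : V →ₗ[ℝ] V →ₗ[ℝ] V)
    (hsymm : ∀ X Y : V, K X Y = K Y X)
    (hadj : ∀ X Y Z : V, ⟪K X Y, Z⟫ = ⟪Y, K X Z⟫)
    (hcomm : ∀ X Y Z : V, K X (K Y Z) = K Y (K X Z))
    (htf : ∀ X : V, LinearMap.trace ℝ V (K X) = 0) :
    K = 0 := by
  set b := stdOrthonormalBasis ℝ V with hb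
  -- trace of K W in terms of inner products
  have htr : ∀ W : V, LinearMap.trace ℝ V (K W) = ⟪W, ∑ i, K (b i) (b i)⟫ := by
    intro W
    rw [trace_inner_formula b, inner_sum]
    refine Finset.sum_congr rfl fun i _ => ?_
    rw [← hadj (b i) W (b i), hsymm, real_inner_comm]
  have key : ∀ X : V, ∑ i, ⟪K X (b i), K X (b i)⟫ = 0 := by
    intro X
    have h1 : ∀ i, ⟪K X (b i), K X (b i)⟫ = ⟪K X X, K (b i) (b i)⟫ := by
      intro i
      calc ⟪K X (b i), K X (b i)⟫ = ⟪K (b i) X, K (b i) X⟫ := by rw [hsymm]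
        _ = ⟪X, K (b i) (K (b i) X)⟫ := hadj _ _ _
        _ = ⟪X, K (b i) (K X (b i))⟫ := by rw [hsymm X (b i)]
        _ = ⟪X, K X (K (b i) (b i))⟫ := by rw [hcomm]
        _ = ⟪K X X, K (b i) (b i)⟫ := (hadj _ _ _).symm
    calc ∑ i, ⟪K X (b i), K X (b i)⟫ = ∑ i, ⟪K X X, K (b i) (b i)⟫ :=
          Finset.sum_congr rfl fun i _ => h1 i
      _ = ⟪K X X, ∑ i, K (b i) (b i)⟫ := (inner_sum _ _ _).symm
      _ = LinearMap.trace ℝ V (K (K X X)) := (htr _).symm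
      _ = 0 := htf _
  have hKb : ∀ X : V, ∀ i, K X (b i) = 0 := by
    intro X i
    have hnn : ∀ j ∈ Finset.univ, (0:ℝ) ≤ ⟪K X (b j), K X (b j)⟫ :=
      fun j _ => real_inner_self_nonneg
    have := (Finset.sum_eq_zero_iff_of_nonneg hnn).mp (key X) i (Finset.mem_univ i)
    exact inner_self_eq_zero.mp this
  ext X Y
  have hY : Y ∈ Submodule.span ℝ (Set.range b) := by
    rw [← OrthonormalBasis.coe_toBasis b, b.toBasis.span_eq]; trivial
  induction hY using Submodule.span_induction with
  | mem y hy => obtain ⟨i, rfl⟩ := hy; simpa using hKb X i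
  | zero => simp
  | add y z _ _ hy hz => simp [map_add, hy, hz]
  | smul c y _ hy => simp [map_smul, hy]
end

section
/- Let λ_1 be a local maximal value of Φ(X)=C(X,X,X) on the unit sphere attained at e_1, and let X be a unit vector orthogonal to e_1. Then k(e_1∧X) ≤ λ_1²/4, with equality if and only if X is an eigenvector of K_{e_1} with eigenvalue λ_1/2. -/
/-!
Moving from `e₁` along the great circle `cos t • e₁ + sin t • W` towards a unit `W ⟂ e₁`,
`Φ` is a cubic trigonometric polynomial whose derivative at `t = 0` is `3 ⟪W, K e₁ e₁⟫`; so at a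
local maximum `K e₁ e₁` is orthogonal to `e₁ᗮ`, i.e. `K e₁ e₁ = λ₁ • e₁`. Total symmetry of the
cubic form then turns `k(e₁ ∧ X)` into `λ₁ ⟪Y, X⟫ - ‖Y‖²` with `Y = K e₁ X`, which equals
`λ₁²/4 - ‖Y - (λ₁/2) • X‖²` for unit `X`.
-/

open RealInnerProductSpace

section InnerProduct

variable {V : Type*} [NormedAddCommGroup V] [InnerProductSpace ℝ V]

lemma mul_inner_sub_inner_self_eq (l : ℝ) {X : V} (hX : ‖X‖ = 1) (Y : V) :
    l * ⟪Y, X⟫ - ⟪Y, Y⟫ = l ^ 2 / 4 - ‖Y - (l / 2) • X‖ ^ 2 := by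
  rw [← real_inner_self_eq_norm_sq, real_inner_sub_sub_self]
  simp only [real_inner_smul_left, real_inner_smul_right]
  rw [real_inner_self_eq_norm_sq X, hX, real_inner_comm X Y]
  ring

lemma mul_inner_sub_inner_self_le (l : ℝ) {X : V} (hX : ‖X‖ = 1) (Y : V) :
    l * ⟪Y, X⟫ - ⟪Y, Y⟫ ≤ l ^ 2 / 4 := by
  rw [mul_inner_sub_inner_self_eq l hX]
  linarith [sq_nonneg ‖Y - (l / 2) • X‖]

lemma mul_inner_sub_inner_self_eq_iff (l : ℝ) {X : V} (hX : ‖X‖ = 1) (Y : V) :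
    l * ⟪Y, X⟫ - ⟪Y, Y⟫ = l ^ 2 / 4 ↔ Y = (l / 2) • X := by
  rw [mul_inner_sub_inner_self_eq l hX, sub_eq_self, sq_eq_zero_iff, norm_eq_zero, sub_eq_zero]

lemma norm_cos_smul_add_sin_smul_s13 {e w : V} (he : ‖e‖ = 1) (hw : ‖w‖ = 1) (hwe : ⟪w, e⟫ = 0)
    (t : ℝ) : ‖Real.cos t • e + Real.sin t • w‖ = 1 := by
  have horth : ⟪Real.cos t • e, Real.sin t • w⟫ = 0 := by
    rw [real_inner_smul_left, real_inner_smul_right, real_inner_comm, hwe, mul_zero, mul_zero]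
  have hsq := norm_add_sq_eq_norm_sq_add_norm_sq_real horth
  rw [norm_smul, norm_smul, he, hw, Real.norm_eq_abs, Real.norm_eq_abs] at hsq
  nlinarith [abs_mul_abs_self (Real.cos t), abs_mul_abs_self (Real.sin t),
    Real.cos_sq_add_sin_sq t, norm_nonneg (Real.cos t • e + Real.sin t • w)]

end InnerProduct

lemma hasDerivAt_trigonometric_cubic (a b d c : ℝ) :
    HasDerivAt (fun t => a * Real.cos t ^ 3 + 3 * b * (Real.cos t ^ 2 * Real.sin t)
      + 3 * d * (Real.cos t * Real.sin t ^ 2) + c * Real.sin t ^ 3) (3 * b) 0 := by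
  have hcos := Real.hasDerivAt_cos 0
  have hsin := Real.hasDerivAt_sin 0
  refine ((((hcos.pow 3).const_mul a).add (((hcos.pow 2).mul hsin).const_mul (3 * b))).add
      ((hcos.mul (hsin.pow 2)).const_mul (3 * d)) |>.add ((hsin.pow 3).const_mul c)).congr_deriv ?_
  simp

section CubicForm

variable {V : Type*} [NormedAddCommGroup V] [InnerProductSpace ℝ V]
  {K : V →ₗ[ℝ] V →ₗ[ℝ] V}

lemma inner_apply_smul_add_smul (hsymm : ∀ X Y : V, K X Y = K Y X)
    (hadj : ∀ X Y Z : V, ⟪K X Y, Z⟫ = ⟪Y, K X Z⟫) (e w : V) (x y : ℝ) :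
    ⟪x • e + y • w, K (x • e + y • w) (x • e + y • w)⟫ =
      ⟪e, K e e⟫ * x ^ 3 + 3 * ⟪w, K e e⟫ * (x ^ 2 * y)
        + 3 * ⟪w, K e w⟫ * (x * y ^ 2) + ⟪w, K w w⟫ * y ^ 3 := by
  have hew : ⟪e, K e w⟫ = ⟪w, K e e⟫ := by rw [← hadj, real_inner_comm]
  have hww : ⟪e, K w w⟫ = ⟪w, K e w⟫ := by rw [← hadj, hsymm, real_inner_comm]
  simp only [map_add, map_smul, LinearMap.add_apply, LinearMap.smul_apply, inner_add_left,
    inner_add_right, real_inner_smul_left, real_inner_smul_right, hsymm w e, hew, hww]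
  ring

variable (hsymm : ∀ X Y : V, K X Y = K Y X) (hadj : ∀ X Y Z : V, ⟪K X Y, Z⟫ = ⟪Y, K X Z⟫)
  {e : V} (he : ‖e‖ = 1)
  (hmax : IsLocalMaxOn (fun X : V => ⟪X, K X X⟫) {X : V | ‖X‖ = 1} e)
include hsymm hadj he hmax

lemma inner_apply_self_eq_zero_of_isLocalMaxOn_of_norm_eq_one {w : V} (hw : ‖w‖ = 1)
    (hwe : ⟪w, e⟫ = 0) :
    ⟪w, K e e⟫ = 0 := by
  set γ : ℝ → V := fun t => Real.cos t • e + Real.sin t • w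
  have hγ0 : γ 0 = e := by simp [γ]
  have hγ : Filter.Tendsto γ (nhds 0) (nhdsWithin e {X : V | ‖X‖ = 1}) := by
    refine tendsto_nhdsWithin_iff.2 ⟨?_, .of_forall (norm_cos_smul_add_sin_smul_s13 he hw hwe)⟩
    have hcont : Continuous γ := by fun_prop
    simpa [hγ0] using hcont.tendsto 0
  have hloc : IsLocalMax (fun t => ⟪γ t, K (γ t) (γ t)⟫) 0 := by
    rw [← hγ0] at hmax hγ
    exact hmax.comp_tendsto hγ
  have hderiv : HasDerivAt (fun t => ⟪γ t, K (γ t) (γ t)⟫) (3 * ⟪w, K e e⟫) 0 := by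
    simp only [γ, inner_apply_smul_add_smul hsymm hadj]
    exact hasDerivAt_trigonometric_cubic _ _ _ _
  linarith [hloc.hasDerivAt_eq_zero hderiv]

lemma inner_apply_self_eq_zero_of_isLocalMaxOn {w : V} (hwe : ⟪w, e⟫ = 0) : ⟪w, K e e⟫ = 0 := by
  rcases eq_or_ne w 0 with rfl | hw
  · exact inner_zero_left _
  have hunit : ‖‖w‖⁻¹ • w‖ = 1 := norm_smul_inv_norm hw
  have h := inner_apply_self_eq_zero_of_isLocalMaxOn_of_norm_eq_one hsymm hadj he hmax hunit
    (by rw [real_inner_smul_left, hwe, mul_zero])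
  rw [real_inner_smul_left] at h
  exact (mul_eq_zero.1 h).resolve_left (inv_ne_zero (norm_ne_zero_iff.2 hw))

lemma apply_self_eq_inner_smul_of_isLocalMaxOn : K e e = ⟪e, K e e⟫ • e := by
  set v := K e e - ⟪e, K e e⟫ • e
  have hve : ⟪v, e⟫ = 0 := by
    rw [inner_sub_left, real_inner_smul_left, real_inner_self_eq_norm_sq, he, real_inner_comm]
    ring
  have hvv : ⟪v, v⟫ = 0 := by
    rw [inner_sub_right, real_inner_smul_right, hve, mul_zero, sub_zero]
    exact inner_apply_self_eq_zero_of_isLocalMaxOn hsymm hadj he hmax hve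
  exact sub_eq_zero.1 (inner_self_eq_zero.1 hvv)

end CubicForm

theorem curvature_with_max_direction_bound_general
    {V : Type*} [NormedAddCommGroup V] [InnerProductSpace ℝ V]
    (K : V →ₗ[ℝ] V →ₗ[ℝ] V)
    (hsymm : ∀ X Y : V, K X Y = K Y X)
    (hadj : ∀ X Y Z : V, ⟪K X Y, Z⟫ = ⟪Y, K X Z⟫)
    (e₁ : V) (he₁ : ‖e₁‖ = 1)
    (hmax : IsLocalMaxOn (fun X : V => ⟪X, K X X⟫) {X : V | ‖X‖ = 1} e₁)
    (l₁ : ℝ) (hl₁ : ⟪e₁, K e₁ e₁⟫ = l₁)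
    (X : V) (hX : ‖X‖ = 1) :
    ⟪K e₁ e₁, K X X⟫ - ⟪K e₁ X, K e₁ X⟫ ≤ l₁ ^ 2 / 4 ∧
      (⟪K e₁ e₁, K X X⟫ - ⟪K e₁ X, K e₁ X⟫ = l₁ ^ 2 / 4 ↔
        K e₁ X = (l₁ / 2) • X) := by
  have hKe : K e₁ e₁ = l₁ • e₁ :=
    hl₁ ▸ apply_self_eq_inner_smul_of_isLocalMaxOn hsymm hadj he₁ hmax
  have hk : ⟪K e₁ e₁, K X X⟫ = l₁ * ⟪K e₁ X, X⟫ := by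
    rw [hKe, real_inner_smul_left, ← hadj, hsymm]
  rw [hk]
  exact ⟨mul_inner_sub_inner_self_le l₁ hX _, mul_inner_sub_inner_self_eq_iff l₁ hX _⟩

/-- If `Φ(X) = C(X,X,X)` attains a local maximum `λ₁` at `e₁` and `X` is a unit
vector orthogonal to `e₁`, then `k(e₁ ∧ X) ≤ λ₁²/4`, with equality iff `X` is an
eigenvector of `K_{e₁}` with eigenvalue `λ₁/2`. -/
theorem curvature_with_max_direction_bound
    {V : Type*} [NormedAddCommGroup V] [InnerProductSpace ℝ V]
    [FiniteDimensional ℝ V]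
    (K : V →ₗ[ℝ] V →ₗ[ℝ] V)
    (hsymm : ∀ X Y : V, K X Y = K Y X)
    (hadj : ∀ X Y Z : V, ⟪K X Y, Z⟫ = ⟪Y, K X Z⟫)
    (e₁ : V) (he₁ : ‖e₁‖ = 1)
    (hmax : IsLocalMaxOn (fun X : V => ⟪X, K X X⟫) {X : V | ‖X‖ = 1} e₁)
    (l₁ : ℝ) (hl₁ : ⟪e₁, K e₁ e₁⟫ = l₁)
    (X : V) (hX : ‖X‖ = 1) (hXe : ⟪X, e₁⟫ = 0) :
    ⟪K e₁ e₁, K X X⟫ - ⟪K e₁ X, K e₁ X⟫ ≤ l₁ ^ 2 / 4 ∧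
      (⟪K e₁ e₁, K X X⟫ - ⟪K e₁ X, K e₁ X⟫ = l₁ ^ 2 / 4 ↔
        K e₁ X = (l₁ / 2) • X) :=
  curvature_with_max_direction_bound_general K hsymm hadj e₁ he₁ hmax l₁ hl₁ X hX
end

section
/- Let J be a skew-symmetric endomorphism of V (J·g = 0) acting as a derivation on K with J·K = 0 (i.e. J(K(X,Y)) = K(JX,Y) + K(X,JY) for all X,Y). If Φ attains a local maximum λ_1 at e_1 and 2λ_j - λ_1 ≠ 0 for all eigenvalues λ_j (j ≥ 2) of K_{e_1} on e_1^⊥, then Je_1 = 0. -/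
open RealInnerProductSpace

/-- If `J` is skew-symmetric with `J·K = 0`, `Φ` attains a local maximum `λ₁` at
`e₁`, and `2λ_j - λ₁ ≠ 0` for all eigenvalues `λ_j` (`j ≥ 2`) of `K_{e₁}` on
`e₁^⊥`, then `J e₁ = 0`. -/
theorem derivation_kills_max_direction
    {V : Type*} [NormedAddCommGroup V] [InnerProductSpace ℝ V]
    {n : ℕ} (b : OrthonormalBasis (Fin (n + 1)) ℝ V)
    (K : V →ₗ[ℝ] V →ₗ[ℝ] V)
    (hsymm : ∀ X Y : V, K X Y = K Y X)
    (hadj : ∀ X Y Z : V, ⟪K X Y, Z⟫ = ⟪Y, K X Z⟫)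
    (J : V →ₗ[ℝ] V)
    (hJskew : ∀ X Y : V, ⟪J X, Y⟫ = -⟪X, J Y⟫)
    (hJK : ∀ X Y : V, J (K X Y) = K (J X) Y + K X (J Y))
    (hmax : IsLocalMaxOn (fun X : V => ⟪X, K X X⟫) {X : V | ‖X‖ = 1} (b 0))
    (l : Fin (n + 1) → ℝ)
    (heig : ∀ i : Fin (n + 1), K (b 0) (b i) = l i • b i)
    (hne : ∀ j : Fin (n + 1), j ≠ 0 → 2 * l j - l 0 ≠ 0) :
    J (b 0) = 0 := by
  set v := J (b 0) with hv
  have key : l 0 • v = (2 : ℝ) • K (b 0) v := by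
    have h := hJK (b 0) (b 0)
    rw [heig 0, hsymm (J (b 0)) (b 0)] at h
    simpa [two_smul] using h
  have hc0 : ⟪v, b 0⟫ = 0 := by
    have h := hJskew (b 0) (b 0)
    rw [real_inner_comm] at h
    rw [real_inner_comm]
    linarith
  have hcj : ∀ j : Fin (n + 1), ⟪v, b j⟫ = 0 := by
    intro j
    by_cases hj : j = 0
    · rw [hj]; exact hc0
    · have h1 := congrArg (fun w => ⟪w, b j⟫) key
      simp only [real_inner_smul_left] at h1
      rw [hadj, heig j, real_inner_smul_right] at h1
      have h2 : (2 * l j - l 0) * ⟪v, b j⟫ = 0 := by ring_nf; linarith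
      exact (mul_eq_zero.mp h2).resolve_left (hne j hj)
  have hr : b.repr v = 0 := by
    ext i
    rw [b.repr_apply_apply, real_inner_comm]
    simpa using hcj i
  simpa using b.repr.map_eq_zero_iff.mp hr
end

section
/- If the sectional K-curvature is negative for every 2-plane of V and J is a skew-symmetric endomorphism of V with J·K = 0 (J acting as a derivation), then J = 0. -/
/-!
Let `X` be a unit vector on which `‖J ·‖` is maximal and `c = ‖J X‖ > 0`. Equality in
Cauchy–Schwarz gives `J² X = -c² X`, so `J` rotates the orthonormal pair `X, Y = J X / c` with
speed `c`. Because `J` is a derivation of `K`, it rotates `K(X,X) - K(Y,Y)` and `K(X,Y)` with speed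
`2c`, which exceeds the maximal speed `c` unless both vanish. But then the sectional curvature of
the plane spanned by `X, Y` is `‖K(X,X)‖² ≥ 0`.
-/

open RealInnerProductSpace

theorem LinearMap.exists_norm_eq_one_forall_norm_apply_le {E F : Type*}
    [NormedAddCommGroup E] [NormedSpace ℝ E] [FiniteDimensional ℝ E] [Nontrivial E]
    [NormedAddCommGroup F] [NormedSpace ℝ F] (T : E →ₗ[ℝ] F) :
    ∃ x : E, ‖x‖ = 1 ∧ ∀ v : E, ‖T v‖ ≤ ‖T x‖ * ‖v‖ := by
  obtain ⟨x, hx, hmax⟩ := (isCompact_sphere (0 : E) 1).exists_isMaxOn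
    (NormedSpace.sphere_nonempty.2 zero_le_one) T.continuous_of_finiteDimensional.norm.continuousOn
  refine ⟨x, mem_sphere_zero_iff_norm.1 hx, fun v => ?_⟩
  rcases eq_or_ne v 0 with rfl | hv
  · simp
  have hunit : ‖v‖⁻¹ • v ∈ Metric.sphere (0 : E) 1 := by
    rw [mem_sphere_zero_iff_norm, norm_smul, norm_inv, norm_norm,
      inv_mul_cancel₀ (norm_ne_zero_iff.2 hv)]
  have h := hmax hunit
  simp only [Set.mem_ofPred_eq, map_smul, norm_smul, norm_inv, norm_norm] at h
  rwa [inv_mul_le_iff₀ (norm_pos_iff.2 hv), mul_comm] at h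

section SkewSymmetric

variable {V : Type*} [NormedAddCommGroup V] [InnerProductSpace ℝ V] {J : V →ₗ[ℝ] V}

theorem apply_apply_eq_neg_smul_of_forall_norm_apply_le
    (hJ : ∀ x y : V, ⟪J x, y⟫ = -⟪x, J y⟫) {x : V} (hx : ‖x‖ = 1)
    (hmax : ∀ v : V, ‖J v‖ ≤ ‖J x‖ * ‖v‖) :
    J (J x) = -(‖J x‖ ^ 2 • x) := by
  set c := ‖J x‖
  have hnorm : ‖J (J x)‖ ≤ c ^ 2 := by simpa [sq] using hmax (J x)
  have hinner : ⟪J (J x), x⟫ = -c ^ 2 := by rw [hJ, real_inner_self_eq_norm_sq]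
  have hsq : ‖J (J x) + c ^ 2 • x‖ ^ 2 ≤ 0 := by
    rw [norm_add_sq_real, real_inner_smul_right, hinner, norm_smul, hx,
      Real.norm_of_nonneg (by positivity)]
    nlinarith [norm_nonneg (J (J x))]
  exact eq_neg_of_add_eq_zero_left
    (norm_eq_zero.1 (by nlinarith [norm_nonneg (J (J x) + c ^ 2 • x)]))

theorem exists_orthonormal_rotation_of_ne_zero [FiniteDimensional ℝ V]
    (hJ : ∀ x y : V, ⟪J x, y⟫ = -⟪x, J y⟫) (hJ0 : J ≠ 0) :
    ∃ (c : ℝ) (x y : V), 0 < c ∧ ‖x‖ = 1 ∧ ‖y‖ = 1 ∧ ⟪x, y⟫ = 0 ∧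
      J x = c • y ∧ J y = -(c • x) ∧ ∀ v : V, ‖J v‖ ≤ c * ‖v‖ := by
  obtain ⟨v, hv⟩ : ∃ v, J v ≠ 0 := by
    by_contra! h
    exact hJ0 (LinearMap.ext h)
  have : Nontrivial V := ⟨⟨v, 0, fun h => hv (by simp [h])⟩⟩
  obtain ⟨x, hx, hmax⟩ := J.exists_norm_eq_one_forall_norm_apply_le
  have hc : 0 < ‖J x‖ := by
    by_contra! h
    exact hv (norm_le_zero_iff.1
      ((hmax v).trans (mul_nonpos_of_nonpos_of_nonneg h (norm_nonneg v))))
  have hJJx := apply_apply_eq_neg_smul_of_forall_norm_apply_le hJ hx hmax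
  refine ⟨‖J x‖, x, ‖J x‖⁻¹ • J x, hc, hx, ?_, ?_, ?_, ?_, hmax⟩
  · rw [norm_smul, norm_inv, norm_norm, inv_mul_cancel₀ hc.ne']
  · have hxJx : ⟪x, J x⟫ = 0 := by linarith [hJ x x, real_inner_comm x (J x)]
    rw [real_inner_smul_right, hxJx, mul_zero]
  · rw [smul_smul, mul_inv_cancel₀ hc.ne', one_smul]
  · rw [map_smul, hJJx, smul_neg, smul_smul, sq, ← mul_assoc, inv_mul_cancel₀ hc.ne', one_mul]

theorem eq_zero_of_apply_apply_eq_neg_smul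
    (hJ : ∀ x y : V, ⟪J x, y⟫ = -⟪x, J y⟫) {c μ : ℝ} (hbound : ∀ v : V, ‖J v‖ ≤ c * ‖v‖)
    (hμ : c ^ 2 < μ) {v : V} (hv : J (J v) = -(μ • v)) : v = 0 := by
  have hsq : ‖J v‖ ^ 2 = μ * ‖v‖ ^ 2 := by
    rw [← real_inner_self_eq_norm_sq, hJ, hv, inner_neg_right, real_inner_smul_right,
      real_inner_self_eq_norm_sq, neg_neg]
  have hle : ‖J v‖ ^ 2 ≤ (c * ‖v‖) ^ 2 := pow_le_pow_left₀ (norm_nonneg _) (hbound v) 2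
  rw [hsq, mul_pow] at hle
  have hv0 : ‖v‖ ^ 2 ≤ 0 := nonpos_of_mul_nonpos_right (by linarith) (sub_pos.2 hμ)
  exact norm_eq_zero.1 (pow_eq_zero_iff two_ne_zero |>.1 (le_antisymm hv0 (sq_nonneg _)))

end SkewSymmetric

section Derivation

variable {R M : Type*} [CommRing R] [AddCommGroup M] [Module R M]
  {K : M →ₗ[R] M →ₗ[R] M} {J : M →ₗ[R] M} {c : R} {x y : M}

theorem derivation_apply_sub_eq_smul (hsymm : ∀ x y : M, K x y = K y x)
    (hJK : ∀ x y : M, J (K x y) = K (J x) y + K x (J y))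
    (hx : J x = c • y) (hy : J y = -(c • x)) :
    J (K x x - K y y) = (4 * c) • K x y := by
  simp only [map_sub, hJK, hx, hy, map_smul, map_neg, LinearMap.smul_apply, LinearMap.neg_apply]
  rw [hsymm y x]
  module

theorem derivation_apply_eq_neg_smul_sub (hJK : ∀ x y : M, J (K x y) = K (J x) y + K x (J y))
    (hx : J x = c • y) (hy : J y = -(c • x)) :
    J (K x y) = -(c • (K x x - K y y)) := by
  simp only [hJK, hx, hy, map_smul, map_neg, LinearMap.smul_apply]
  module

end Derivation

theorem derivation_of_negative_curvature_vanishes_general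
    {V : Type*} [NormedAddCommGroup V] [InnerProductSpace ℝ V]
    [FiniteDimensional ℝ V]
    (K : V →ₗ[ℝ] V →ₗ[ℝ] V)
    (hsymm : ∀ X Y : V, K X Y = K Y X)
    (hneg : ∀ X Y : V, ‖X‖ = 1 → ‖Y‖ = 1 → ⟪X, Y⟫ = 0 →
      ⟪K X X, K Y Y⟫ - ⟪K X Y, K X Y⟫ < 0)
    (J : V →ₗ[ℝ] V)
    (hJskew : ∀ X Y : V, ⟪J X, Y⟫ = -⟪X, J Y⟫)
    (hJK : ∀ X Y : V, J (K X Y) = K (J X) Y + K X (J Y)) :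
    J = 0 := by
  by_contra hJ
  obtain ⟨c, X, Y, hc, hX, hY, hXY, hJX, hJY, hbound⟩ :=
    exists_orthonormal_rotation_of_ne_zero hJskew hJ
  have hdiag := derivation_apply_sub_eq_smul hsymm hJK hJX hJY
  have hD : K X X - K Y Y = 0 := by
    refine eq_zero_of_apply_apply_eq_neg_smul hJskew hbound (μ := 4 * c ^ 2) (by nlinarith) ?_
    rw [hdiag, map_smul, derivation_apply_eq_neg_smul_sub hJK hJX hJY]
    module
  have hB : K X Y = 0 := by
    rw [hD, map_zero, eq_comm, smul_eq_zero] at hdiag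
    exact hdiag.resolve_left (by positivity)
  have hcurv := hneg X Y hX hY hXY
  rw [sub_eq_zero.1 hD, hB, inner_zero_left, sub_zero] at hcurv
  exact hcurv.not_ge real_inner_self_nonneg

/-- If the sectional K-curvature is negative for every 2-plane and `J` is a
skew-symmetric endomorphism with `J·K = 0` (as a derivation), then `J = 0`. -/
theorem derivation_of_negative_curvature_vanishes
    {V : Type*} [NormedAddCommGroup V] [InnerProductSpace ℝ V]
    [FiniteDimensional ℝ V]
    (K : V →ₗ[ℝ] V →ₗ[ℝ] V)
    (hsymm : ∀ X Y : V, K X Y = K Y X)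
    (hadj : ∀ X Y Z : V, ⟪K X Y, Z⟫ = ⟪Y, K X Z⟫)
    (hneg : ∀ X Y : V, ‖X‖ = 1 → ‖Y‖ = 1 → ⟪X, Y⟫ = 0 →
      ⟪K X X, K Y Y⟫ - ⟪K X Y, K X Y⟫ < 0)
    (J : V →ₗ[ℝ] V)
    (hJskew : ∀ X Y : V, ⟪J X, Y⟫ = -⟪X, J Y⟫)
    (hJK : ∀ X Y : V, J (K X Y) = K (J X) Y + K X (J Y)) :
    J = 0 :=
  derivation_of_negative_curvature_vanishes_general K hsymm hneg J hJskew hJK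
end

section
/- If the sectional K-curvature is non-positive for every 2-plane of V and [K,K]·K = 0 (each endomorphism [K,K](X,Y) acts as a derivation annihilating K), then the sectional K-curvature vanishes for every 2-plane, i.e. [K,K] = 0. -/
/-!
The operators `R(X,Y) = [K_X, K_Y]` are skew-adjoint, so `tr (R(X,Y)²) ≤ 0`, with equality only
if `R(X,Y) = 0`. Cyclicity of the trace together with the derivation identity
`[R(X,Y), K_Y] = K_{R(X,Y)Y}` gives `tr (R(X,Y)²) = -tr (K_{R(X,Y)Y} K_X)`, and summing over an
orthonormal basis `Y = e_j` turns `Σ_j R(X,e_j)e_j` into the Ricci operator `Ric X`. Non-positive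
sectional curvature makes the symmetric operator `Ric` negative semidefinite, so for an
eigenvector `X` of `Ric` with eigenvalue `μ ≤ 0` we get `Σ_j tr (R(X,e_j)²) = -μ tr (K_X²) ≥ 0`.
Hence every `R(X,e_j)` vanishes, and since the eigenvectors span `V`, `[K,K] = 0`.
-/

open RealInnerProductSpace

theorem LinearMap.trace_lie_mul_self {R M : Type*} [CommRing R] [AddCommGroup M] [Module R M]
    [Module.Free R M] [Module.Finite R M] (A B : Module.End R M) :
    trace R M (⁅A, B⁆ * ⁅A, B⁆) = -trace R M (⁅⁅A, B⁆, B⁆ * A) := by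
  set D := ⁅A, B⁆
  have hDD : D * D = D * A * B - D * B * A := by
    rw [show D * D = D * ⁅A, B⁆ from rfl, Ring.lie_def, mul_sub, mul_assoc, mul_assoc]
  rw [hDD, Ring.lie_def, sub_mul, map_sub, map_sub, trace_mul_comm R (D * A) B, mul_assoc B D A,
    mul_assoc D B A]
  abel

section

variable {V : Type*} [NormedAddCommGroup V] [InnerProductSpace ℝ V]

theorem LinearMap.IsSymmetric.inner_lie_apply {S T : Module.End ℝ V} (hS : S.IsSymmetric)
    (hT : T.IsSymmetric) (u v : V) : ⟪⁅S, T⁆ u, v⟫ = -⟪u, ⁅S, T⁆ v⟫ := by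
  simp only [Ring.lie_def, sub_apply, Module.End.mul_apply, inner_sub_left, inner_sub_right,
    hS _, hT _]
  ring

theorem trace_mul_self_eq_neg_sum_norm_sq {ι : Type*} [Fintype ι] {D : Module.End ℝ V}
    (hD : ∀ u v, ⟪D u, v⟫ = -⟪u, D v⟫) (b : OrthonormalBasis ι ℝ V) :
    LinearMap.trace ℝ V (D * D) = -∑ i, ‖D (b i)‖ ^ 2 := by
  rw [LinearMap.trace_eq_sum_inner _ b, ← Finset.sum_neg_distrib]
  refine Finset.sum_congr rfl fun i _ => ?_
  rw [Module.End.mul_apply, real_inner_comm, hD, real_inner_self_eq_norm_sq]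

variable [FiniteDimensional ℝ V]

theorem LinearMap.IsSymmetric.trace_mul_self_nonneg {T : Module.End ℝ V} (hT : T.IsSymmetric) :
    0 ≤ LinearMap.trace ℝ V (T * T) := by
  rw [LinearMap.trace_eq_sum_inner _ (stdOrthonormalBasis ℝ V)]
  refine Finset.sum_nonneg fun i _ => ?_
  rw [Module.End.mul_apply, ← hT]
  exact real_inner_self_nonneg

theorem trace_mul_self_nonpos_of_skew {D : Module.End ℝ V} (hD : ∀ u v, ⟪D u, v⟫ = -⟪u, D v⟫) :
    LinearMap.trace ℝ V (D * D) ≤ 0 := by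
  rw [trace_mul_self_eq_neg_sum_norm_sq hD (stdOrthonormalBasis ℝ V), neg_nonpos]
  positivity

theorem eq_zero_of_trace_mul_self_eq_zero {D : Module.End ℝ V}
    (hD : ∀ u v, ⟪D u, v⟫ = -⟪u, D v⟫) (h : LinearMap.trace ℝ V (D * D) = 0) : D = 0 := by
  let b := stdOrthonormalBasis ℝ V
  rw [trace_mul_self_eq_neg_sum_norm_sq hD b, neg_eq_zero,
    Finset.sum_eq_zero_iff_of_nonneg fun _ _ => by positivity] at h
  refine b.toBasis.ext fun i => ?_
  simpa using h i (Finset.mem_univ i)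

end

section

variable {V : Type*} [NormedAddCommGroup V] [InnerProductSpace ℝ V] (K : V →ₗ[ℝ] V →ₗ[ℝ] V)

/-- On an orthonormal pair this is the sectional K-curvature of the plane they span. -/
def sectionalForm (X Y : V) : ℝ := ⟪K X X, K Y Y⟫ - ⟪K X Y, K X Y⟫

theorem sectionalForm_smul_smul (a b : ℝ) (X Y : V) :
    sectionalForm K (a • X) (b • Y) = (a ^ 2 * b ^ 2) * sectionalForm K X Y := by
  simp only [sectionalForm, map_smul, LinearMap.smul_apply, real_inner_smul_left,
    real_inner_smul_right]
  ring

theorem sectionalForm_add_smul (hsymm : ∀ X Y : V, K X Y = K Y X) (c : ℝ) (X Y : V) :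
    sectionalForm K X (Y + c • X) = sectionalForm K X Y := by
  simp only [sectionalForm, map_add, map_smul, LinearMap.add_apply, LinearMap.smul_apply,
    hsymm Y X, inner_add_left, inner_add_right, real_inner_smul_left, real_inner_smul_right,
    real_inner_comm (K X Y) (K X X)]
  ring

theorem sectionalForm_nonpos (hsymm : ∀ X Y : V, K X Y = K Y X)
    (hnonpos : ∀ X Y : V, ‖X‖ = 1 → ‖Y‖ = 1 → ⟪X, Y⟫ = 0 → sectionalForm K X Y ≤ 0)
    (X Y : V) : sectionalForm K X Y ≤ 0 := by
  rcases eq_or_ne X 0 with rfl | hX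
  · simp [sectionalForm]
  set Y' := Y - (⟪X, Y⟫ / ‖X‖ ^ 2) • X
  have hXY' : ⟪X, Y'⟫ = 0 := by
    have : ‖X‖ ≠ 0 := norm_ne_zero_iff.mpr hX
    rw [inner_sub_right, real_inner_smul_right, real_inner_self_eq_norm_sq]
    field_simp
    ring
  rw [show Y = Y' + (⟪X, Y⟫ / ‖X‖ ^ 2) • X by simp [Y'], sectionalForm_add_smul K hsymm]
  rcases eq_or_ne Y' 0 with hY' | hY'
  · simp [sectionalForm, hY']
  have h := hnonpos _ _ (norm_smul_inv_norm hX) (norm_smul_inv_norm hY')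
    (by rw [real_inner_smul_left, real_inner_smul_right, hXY', mul_zero, mul_zero])
  rw [sectionalForm_smul_smul] at h
  exact nonpos_of_mul_nonpos_right h (by positivity)

variable {ι : Type*} [Fintype ι]

def ricci (e : ι → V) : Module.End ℝ V :=
  ∑ j, (K.flip (K (e j) (e j)) - K (e j) ∘ₗ K.flip (e j))

theorem ricci_apply (e : ι → V) (X : V) : ricci K e X = ∑ j, ⁅K X, K (e j)⁆ (e j) := by
  simp [ricci, Ring.lie_def]

variable {K}

theorem inner_lie_apply_self (hK : ∀ X, (K X).IsSymmetric) (X u W : V) :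
    ⟪⁅K X, K u⁆ u, W⟫ = ⟪K u u, K X W⟫ - ⟪K X u, K u W⟫ := by
  rw [Ring.lie_def, LinearMap.sub_apply, inner_sub_left, Module.End.mul_apply,
    Module.End.mul_apply, hK X (K u u) W, hK u (K X u) W]

theorem ricci_isSymmetric (hsymm : ∀ X Y : V, K X Y = K Y X) (hK : ∀ X, (K X).IsSymmetric)
    (e : ι → V) : (ricci K e).IsSymmetric := by
  intro X W
  rw [real_inner_comm (ricci K e W) X, ricci_apply, ricci_apply, sum_inner, sum_inner]
  refine Finset.sum_congr rfl fun j _ => ?_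
  rw [inner_lie_apply_self hK, inner_lie_apply_self hK, hsymm X W,
    hsymm (e j) W, hsymm (e j) X, real_inner_comm (K W (e j))]

theorem inner_ricci_apply_self_nonpos (hsymm : ∀ X Y : V, K X Y = K Y X)
    (hK : ∀ X, (K X).IsSymmetric) (hsec : ∀ X Y : V, sectionalForm K X Y ≤ 0) (e : ι → V)
    (X : V) : ⟪ricci K e X, X⟫ ≤ 0 := by
  rw [ricci_apply, sum_inner]
  refine Finset.sum_nonpos fun j _ => ?_
  rw [inner_lie_apply_self hK, hsymm (e j) X, real_inner_comm]
  exact hsec X (e j)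

theorem sum_trace_lie_mul_self [FiniteDimensional ℝ V]
    (hder : ∀ X Y Z : V, ⁅⁅K X, K Y⁆, K Z⁆ = K (⁅K X, K Y⁆ Z)) (e : ι → V) (X : V) :
    ∑ j, LinearMap.trace ℝ V (⁅K X, K (e j)⁆ * ⁅K X, K (e j)⁆)
      = -LinearMap.trace ℝ V (K (ricci K e X) * K X) := by
  simp only [LinearMap.trace_lie_mul_self, hder, ricci_apply, map_sum, Finset.sum_mul,
    Finset.sum_neg_distrib]

theorem lie_eq_zero_of_ricci_apply_eq_smul [FiniteDimensional ℝ V] (hK : ∀ X, (K X).IsSymmetric)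
    (hder : ∀ X Y Z : V, ⁅⁅K X, K Y⁆, K Z⁆ = K (⁅K X, K Y⁆ Z)) (e : ι → V) {X : V} {μ : ℝ}
    (hμ : μ ≤ 0) (hX : ricci K e X = μ • X) (j : ι) : ⁅K X, K (e j)⁆ = 0 := by
  have hskew : ∀ j, ∀ u v, ⟪⁅K X, K (e j)⁆ u, v⟫ = -⟪u, ⁅K X, K (e j)⁆ v⟫ :=
    fun j => (hK X).inner_lie_apply (hK (e j))
  have hsum : 0 ≤ ∑ j, LinearMap.trace ℝ V (⁅K X, K (e j)⁆ * ⁅K X, K (e j)⁆) := by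
    rw [sum_trace_lie_mul_self hder, hX, map_smul, smul_mul_assoc, map_smul, smul_eq_mul,
      ← neg_mul]
    exact mul_nonneg (neg_nonneg.mpr hμ) (hK X).trace_mul_self_nonneg
  have hterm_nonpos : ∀ j ∈ Finset.univ,
      LinearMap.trace ℝ V (⁅K X, K (e j)⁆ * ⁅K X, K (e j)⁆) ≤ 0 :=
    fun j _ => trace_mul_self_nonpos_of_skew (hskew j)
  have hterms := (Finset.sum_eq_zero_iff_of_nonpos hterm_nonpos).mp
    (le_antisymm (Finset.sum_nonpos hterm_nonpos) hsum)
  exact eq_zero_of_trace_mul_self_eq_zero (hskew j) (hterms j (Finset.mem_univ j))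

end

/-- If the sectional K-curvature is non-positive for every 2-plane and
`[K,K]·K = 0`, then the sectional K-curvature vanishes, i.e. `[K,K] = 0`. -/
theorem nonpositive_curvature_with_bracket_derivation
    {V : Type*} [NormedAddCommGroup V] [InnerProductSpace ℝ V]
    [FiniteDimensional ℝ V]
    (K : V →ₗ[ℝ] V →ₗ[ℝ] V)
    (hsymm : ∀ X Y : V, K X Y = K Y X)
    (hadj : ∀ X Y Z : V, ⟪K X Y, Z⟫ = ⟪Y, K X Z⟫)
    (hnonpos : ∀ X Y : V, ‖X‖ = 1 → ‖Y‖ = 1 → ⟪X, Y⟫ = 0 →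
      ⟪K X X, K Y Y⟫ - ⟪K X Y, K X Y⟫ ≤ 0)
    (hder : ∀ X Y Z W : V,
      K X (K Y (K Z W)) - K Y (K X (K Z W))
        = K (K X (K Y Z) - K Y (K X Z)) W + K Z (K X (K Y W) - K Y (K X W))) :
    ∀ X Y Z : V, K X (K Y Z) = K Y (K X Z) := by
  have hderiv : ∀ X Y Z : V, ⁅⁅K X, K Y⁆, K Z⁆ = K (⁅K X, K Y⁆ Z) := fun X Y Z => by
    ext W
    have h := hder X Y Z W
    simp only [Ring.lie_def, LinearMap.sub_apply, Module.End.mul_apply, map_sub] at h ⊢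
    linear_combination (norm := module) h
  have hsec := sectionalForm_nonpos K hsymm hnonpos
  let e := stdOrthonormalBasis ℝ V
  have hRic := ricci_isSymmetric hsymm hadj e
  let f := hRic.eigenvectorBasis rfl
  have hvanish : ∀ i j, ⁅K (f i), K (e j)⁆ = 0 := fun i => by
    set μ := hRic.eigenvalues rfl i
    have hf : ricci K e (f i) = μ • f i := hRic.apply_eigenvectorBasis rfl i
    have hμ : μ ≤ 0 := by
      have := inner_ricci_apply_self_nonpos hsymm hadj hsec e (f i)
      rwa [hf, real_inner_smul_left, real_inner_self_eq_norm_sq, f.norm_eq_one i, one_pow,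
        mul_one] at this
    exact lie_eq_zero_of_ricci_apply_eq_smul hadj hderiv e hμ hf
  intro X Y Z
  have hXY : Commute (K X) (K Y) := by
    rw [← f.sum_repr X, ← e.sum_repr Y, map_sum, map_sum]
    exact Commute.sum_left _ _ _ fun i _ => Commute.sum_right _ _ _ fun j _ => by
      rw [map_smul, map_smul]
      exact ((commute_iff_lie_eq.mpr (hvanish i j)).smul_left _).smul_right _
  exact LinearMap.congr_fun hXY.eq Z
end
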